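/- arXiv:2008.01554 — 9 statements merged into one kernel-verified Lean document; each statement's English description precedes it below -/
import Mathlib

section
/- A commutative algebra (over a field of characteristic zero) satisfying the terminal identity [[[P,a],P],P] = 0 for all a (equivalently, the expanded degree-4 identity obtained from it) is a Jordan algebra, i.e., satisfies (x²y)x = x²(yx). -/
/-- For a multiplication `P` and a linear operator `A`, the bracket
`[A,P](x,y) = A(P(x,y)) - P(A(x),y) - P(x,A(y))`. -/
def opBr {V : Type*} [AddCommGroup V] (P : V → V → V) (A : V → V) (x y : V) : V :=
  A (P x y) - P (A x) y - P x (A y)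

/-- For bilinear `B` and multiplication `P`, the bracket `[B,P]`. -/
def biBr {V : Type*} [AddCommGroup V] (B P : V → V → V) (x y z : V) : V :=
  B (P x y) z + B x (P y z) + B y (P x z) - P (B x y) z - P x (B y z) - P y (B x z)

/-- An algebra with multiplication `P` is terminal if `[[[P,a],P],P] = 0` for all `a`,
where `[P,a]` is the left multiplication operator `P a`. -/
def IsTerminalMul {V : Type*} [AddCommGroup V] (P : V → V → V) : Prop :=
  ∀ a x y z, biBr (opBr P (P a)) P x y z = 0

/-- `prods mul n` is the set of all products of `n + 1` elements, in any association. -/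
def prods {V : Type*} (mul : V → V → V) : ℕ → Set V
  | 0 => Set.univ
  | n + 1 => ⋃ i : Fin (n + 1),
      {z | ∃ a ∈ prods mul i.1, ∃ b ∈ prods mul (n - i.1), z = mul a b}

/-- An algebra is nilpotent if all products of sufficiently many elements vanish. -/
def IsNilpotentMul {V : Type*} [Zero V] (mul : V → V → V) : Prop :=
  ∃ n : ℕ, ∀ x ∈ prods mul n, x = 0

/-- The algebra `(V, mul)` is generated by `g`: every submodule containing `g` and closed
under multiplication is all of `V`. -/
def GeneratedBy (K : Type*) {V : Type*} [Field K] [AddCommGroup V] [Module K V]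
    (mul : V → V → V) (g : V) : Prop :=
  ∀ S : Submodule K V, (∀ x ∈ S, ∀ y ∈ S, mul x y ∈ S) → g ∈ S → ∀ v, v ∈ S


/-- A commutative algebra over a field of characteristic zero satisfying the terminal
identity is a Jordan algebra. -/
theorem commutative_terminal_is_jordan
    {K A : Type*} [Field K] [CharZero K]
    [NonUnitalNonAssocRing A] [Module K A]
    [SMulCommClass K A A] [IsScalarTower K A A]
    (hcomm : ∀ x y : A, x * y = y * x)
    (hterm : IsTerminalMul (fun x y : A => x * y)) :
    ∀ x y : A, ((x * x) * y) * x = (x * x) * (y * x) := by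
  intro x y
  have h := hterm x x x y
  simp only [biBr, opBr, mul_sub, sub_mul] at h
  rw [hcomm x (x * x), hcomm x ((x * x) * y)] at h
  have h9 : (3 : K) • (((x * x) * y) * x - (x * x) * (x * y)) = 0 := by
    rw [← h]; module
  have h3 : ((x * x) * y) * x - (x * x) * (x * y) = 0 := by
    have := congrArg (fun z => (3 : K)⁻¹ • z) h9
    simpa [smul_smul, inv_mul_cancel₀ (by norm_num : (3 : K) ≠ 0)] using this
  rw [hcomm y x]
  exact sub_eq_zero.mp h3
end

section
/- Every Lie algebra is a terminal algebra, i.e., the multiplication P(x,y) = [x,y] of a Lie algebra satisfies [[[P,a],P],P] = 0 for all a. -/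
/-- Every Lie algebra is a terminal algebra. -/
theorem lie_algebra_is_terminal
    {K L : Type*} [Field K] [LieRing L] [LieAlgebra K L] :
    IsTerminalMul (fun x y : L => ⁅x, y⁆) := by
  intro a x y z
  simp only [IsTerminalMul, biBr, opBr, lie_sub, sub_lie, lie_add, add_lie, lie_lie]
  abel
end

section
/- Every left Leibniz algebra (an algebra satisfying x(yz) = (xy)z + y(xz)) is a terminal algebra. -/
/-- Every left Leibniz algebra is a terminal algebra. -/
theorem leibniz_is_terminal
    {K A : Type*} [Field K]
    [NonUnitalNonAssocRing A] [Module K A]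
    [SMulCommClass K A A] [IsScalarTower K A A]
    (hleib : ∀ x y z : A, x * (y * z) = (x * y) * z + y * (x * z)) :
    IsTerminalMul (fun x y : A => x * y) := by
  intro a x y z
  have h0 : ∀ u v : A, opBr (fun x y : A => x * y) (fun t => a * t) u v = 0 := by
    intro u v
    simp only [opBr, hleib a u v]
    abel
  simp only [biBr, h0]
  simp
end

section
/- The 3-dimensional complex algebra with basis e₁, e₂, e₃ and nonzero products e₁e₁ = e₂, e₁e₂ = e₃ is a terminal algebra, is nilpotent, and is generated by the single element e₁. -/
/-- The 3-dimensional algebra `T³₀₁` with nonzero products `e₁e₁ = e₂`, `e₁e₂ = e₃`. -/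
def mulT301 (u v : Fin 3 → ℂ) : Fin 3 → ℂ := ![0, u 0 * v 0, u 0 * v 1]

lemma prods_succ_coord0 {n : ℕ} {x : Fin 3 → ℂ} (hx : x ∈ prods mulT301 (n + 1)) :
    x 0 = 0 := by
  simp only [prods, Set.mem_iUnion, Set.mem_setOf_eq] at hx
  obtain ⟨i, a, ha, b, hb, rfl⟩ := hx
  simp [mulT301]

lemma prods_succ2_coord1 {n : ℕ} {x : Fin 3 → ℂ} (hx : x ∈ prods mulT301 (n + 2)) :
    x 1 = 0 := by
  simp only [prods, Set.mem_iUnion, Set.mem_setOf_eq] at hx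
  obtain ⟨i, a, ha, b, hb, rfl⟩ := hx
  rcases i with ⟨i, hi⟩
  rcases i with _ | i
  · -- a ∈ prods 0, b ∈ prods (n+1)
    have hb0 : b 0 = 0 := prods_succ_coord0 (by simpa using hb)
    simp [mulT301, hb0]
  · have ha0 : a 0 = 0 := prods_succ_coord0 ha
    simp [mulT301, ha0]

/-- `T³₀₁` is a terminal algebra, is nilpotent, and is generated by `e₁`. -/
theorem T301_terminal_nilpotent_oneGenerated :
    IsTerminalMul mulT301 ∧ IsNilpotentMul mulT301 ∧
      GeneratedBy ℂ mulT301 ![1, 0, 0] := by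
  refine ⟨?_, ?_, ?_⟩
  · intro a x y z
    funext i
    fin_cases i <;>
      simp [biBr, opBr, mulT301, Matrix.cons_val_zero, Matrix.cons_val_one] <;> ring
  · refine ⟨3, ?_⟩
    intro x hx
    simp only [prods, Set.mem_iUnion, Set.mem_setOf_eq] at hx
    obtain ⟨i, a, ha, b, hb, rfl⟩ := hx
    rcases i with ⟨i, hi⟩
    rcases i with _ | _ | _ | i
    · -- b ∈ prods 2
      have hb0 : b 0 = 0 := prods_succ_coord0 (n := 1) (by simpa using hb)
      have hb1 : b 1 = 0 := prods_succ2_coord1 (n := 0) (by simpa using hb)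
      funext j; fin_cases j <;> simp [mulT301, hb0, hb1]
    · have ha0 : a 0 = 0 := prods_succ_coord0 (n := 0) ha
      funext j; fin_cases j <;> simp [mulT301, ha0]
    · have ha0 : a 0 = 0 := prods_succ_coord0 (n := 1) ha
      funext j; fin_cases j <;> simp [mulT301, ha0]
    · omega
  · intro S hmul hg v
    have h1 : (![1, 0, 0] : Fin 3 → ℂ) ∈ S := hg
    have h2 : (![0, 1, 0] : Fin 3 → ℂ) ∈ S := by
      have := hmul _ h1 _ h1
      have he : mulT301 ![1, 0, 0] ![1, 0, 0] = ![0, 1, 0] := by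
        funext j; fin_cases j <;> simp [mulT301]
      rwa [he] at this
    have h3 : (![0, 0, 1] : Fin 3 → ℂ) ∈ S := by
      have := hmul _ h1 _ h2
      have he : mulT301 ![1, 0, 0] ![0, 1, 0] = ![0, 0, 1] := by
        funext j; fin_cases j <;> simp [mulT301]
      rwa [he] at this
    have hv : v = v 0 • ![1, 0, 0] + v 1 • ![0, 1, 0] + v 2 • ![0, 0, 1] := by
      funext j; fin_cases j <;> simp
    rw [hv]
    exact S.add_mem (S.add_mem (S.smul_mem _ h1) (S.smul_mem _ h2)) (S.smul_mem _ h3)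
end

section
/- Every automorphism of the 3-dimensional algebra T³₀₁ (nonzero products e₁e₁ = e₂, e₁e₂ = e₃) has matrix, in the basis e₁,e₂,e₃, of the form rows (x,0,0), (y,x²,0), (z,xy,x³) with x ≠ 0; conversely every such matrix defines an automorphism. -/
lemma expand3 (φ : (Fin 3 → ℂ) →ₗ[ℂ] (Fin 3 → ℂ)) (u : Fin 3 → ℂ) :
    φ u = u 0 • φ ![1,0,0] + u 1 • φ ![0,1,0] + u 2 • φ ![0,0,1] := by
  have h : u = u 0 • ![(1:ℂ),0,0] + u 1 • ![0,1,0] + u 2 • ![0,0,1] := by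
    funext i; fin_cases i <;> simp
  rw [← map_smul, ← map_smul, ← map_smul, ← map_add, ← map_add, ← h]

/-- A linear map is an automorphism of `T³₀₁` iff it has matrix
rows `(x,0,0), (y,x²,0), (z,xy,x³)` with `x ≠ 0`, i.e. `φ(e₁) = x e₁ + y e₂ + z e₃`,
`φ(e₂) = x² e₂ + x y e₃`, `φ(e₃) = x³ e₃`. -/
theorem T301_automorphisms (φ : (Fin 3 → ℂ) →ₗ[ℂ] (Fin 3 → ℂ)) :
    (Function.Bijective φ ∧ ∀ u v, φ (mulT301 u v) = mulT301 (φ u) (φ v)) ↔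
      ∃ x y z : ℂ, x ≠ 0 ∧
        φ ![1, 0, 0] = ![x, y, z] ∧
        φ ![0, 1, 0] = ![0, x ^ 2, x * y] ∧
        φ ![0, 0, 1] = ![0, 0, x ^ 3] := by
  constructor
  · rintro ⟨hbij, hmul⟩
    set x := φ ![1,0,0] 0 with hx
    set y := φ ![1,0,0] 1 with hy
    set z := φ ![1,0,0] 2 with hz
    have h1 : φ ![1,0,0] = ![x, y, z] := by
      funext i; fin_cases i <;> rfl
    have he2 : mulT301 ![(1:ℂ),0,0] ![1,0,0] = ![0,1,0] := by
      funext i; fin_cases i <;> simp [mulT301]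
    have he3 : mulT301 ![(1:ℂ),0,0] ![0,1,0] = ![0,0,1] := by
      funext i; fin_cases i <;> simp [mulT301]
    have h2 : φ ![0,1,0] = ![0, x ^ 2, x * y] := by
      rw [← he2, hmul, h1]
      funext i; fin_cases i <;> simp [mulT301] <;> ring
    have h3 : φ ![0,0,1] = ![0, 0, x ^ 3] := by
      rw [← he3, hmul, h1, h2]
      funext i; fin_cases i <;> simp [mulT301] <;> ring
    have hxne : x ≠ 0 := by
      intro h0
      have : φ ![0,1,0] = φ 0 := by
        rw [h2, h0, map_zero]
        funext i; fin_cases i <;> simp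
      have := hbij.1 this
      have := congrFun this 1
      simp at this
    exact ⟨x, y, z, hxne, h1, h2, h3⟩
  · rintro ⟨x, y, z, hx, h1, h2, h3⟩
    have hcomp : ∀ u : Fin 3 → ℂ,
        φ u = ![u 0 * x, u 0 * y + u 1 * x ^ 2, u 0 * z + u 1 * (x * y) + u 2 * x ^ 3] := by
      intro u
      rw [expand3 φ u, h1, h2, h3]
      funext i; fin_cases i <;> simp <;> ring
    have hinj : Function.Injective φ := by
      rw [injective_iff_map_eq_zero]
      intro u hu
      rw [hcomp u] at hu
      have h0 := congrFun hu 0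
      have h1' := congrFun hu 1
      have h2' := congrFun hu 2
      simp at h0 h1' h2'
      have hu0 : u 0 = 0 := by
        rcases h0 with h | h
        · exact h
        · exact absurd h hx
      rw [hu0] at h1' h2'
      simp at h1' h2'
      have hu1 : u 1 = 0 := by
        rcases h1' with h | h
        · exact h
        · exact absurd h hx
      rw [hu1] at h2'
      simp at h2'
      have hu2 : u 2 = 0 := by
        rcases h2' with h | h
        · exact h
        · exact absurd h hx
      funext i; fin_cases i <;> simp [hu0, hu1, hu2]
    refine ⟨⟨hinj, ?_⟩, ?_⟩
    · exact (LinearMap.injective_iff_surjective).mp hinj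
    · intro u v
      rw [hcomp (mulT301 u v), hcomp u, hcomp v]
      funext i; fin_cases i <;> simp [mulT301] <;> ring
end

section
/- Let A be an algebra, V a vector space, θ : A × A → V a bilinear map, and define on A ⊕ V the product (x+x')(y+y') = xy + θ(x,y). Then the annihilator of the algebra A_θ so obtained equals (Ann(θ) ∩ Ann(A)) ⊕ V, where Ann(A) = {x : xA + Ax = 0} and Ann(θ) = {x : θ(x,A) = θ(A,x) = 0}. -/
/-- The annihilator of the central extension `A_θ` (with product
`(x+x')(y+y') = xy + θ(x,y)` on `A ⊕ V`) equals `(Ann(θ) ∩ Ann(A)) ⊕ V`. -/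
theorem ann_of_central_extension
    {K A V : Type*} [Field K]
    [NonUnitalNonAssocRing A] [Module K A]
    [SMulCommClass K A A] [IsScalarTower K A A]
    [AddCommGroup V] [Module K V]
    (θ : A →ₗ[K] A →ₗ[K] V) :
    {p : A × V | ∀ q : A × V,
        ((p.1 * q.1, θ p.1 q.1) : A × V) = 0 ∧ ((q.1 * p.1, θ q.1 p.1) : A × V) = 0}
      = {p : A × V | (∀ a : A, θ p.1 a = 0 ∧ θ a p.1 = 0) ∧
          (∀ a : A, p.1 * a = 0 ∧ a * p.1 = 0)} := by
  ext p
  simp only [Set.mem_setOf_eq, Prod.ext_iff, Prod.fst_zero, Prod.snd_zero]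
  constructor
  · intro h
    refine ⟨fun a => ⟨(h (a, 0)).1.2, (h (a, 0)).2.2⟩,
            fun a => ⟨(h (a, 0)).1.1, (h (a, 0)).2.1⟩⟩
  · intro ⟨h1, h2⟩ q
    exact ⟨⟨(h2 q.1).1, (h1 q.1).1⟩, ⟨(h2 q.1).2, (h1 q.1).2⟩⟩
end

section
/- The 4-dimensional complex algebra T⁴₀₃ with basis e₁,…,e₄ and nonzero products e₁e₁ = e₂, e₁e₂ = e₃, e₁e₃ = e₄ is a one-generated nilpotent terminal algebra. -/
/-- The 4-dimensional algebra `T⁴₀₃` with nonzero products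
`e₁e₁ = e₂`, `e₁e₂ = e₃`, `e₁e₃ = e₄`. -/
def mulT403 (u v : Fin 4 → ℂ) : Fin 4 → ℂ := ![0, u 0 * v 0, u 0 * v 1, u 0 * v 2]

lemma prods_zero_T403 : ∀ n, ∀ x ∈ prods mulT403 n, ∀ i : Fin 4, (i : ℕ) < n → x i = 0 := by
  intro n
  induction n using Nat.strong_induction_on with
  | _ n ih =>
    match n with
    | 0 => intro x hx i hi; omega
    | n + 1 =>
      intro x hx i hi
      simp only [prods, Set.mem_iUnion, Set.mem_setOf_eq] at hx
      obtain ⟨k, a, ha, b, hb, rfl⟩ := hx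
      rcases Nat.eq_zero_or_pos k.1 with hk | hk
      · have hb' : ∀ j : Fin 4, (j : ℕ) < n → b j = 0 := fun j hj =>
          ih (n - k.1) (by omega) b hb j (by omega)
        fin_cases i <;> simp_all only [Fin.isValue, Fin.mk_one] <;>
          simp [mulT403] <;> (right; apply hb'; omega)
      · have ha0 : a 0 = 0 := ih k.1 (by omega) a ha 0 hk
        fin_cases i <;> simp [mulT403, ha0]

/-- `T⁴₀₃` is a one-generated nilpotent terminal algebra. -/
theorem T403_terminal_nilpotent_oneGenerated :
    IsTerminalMul mulT403 ∧ IsNilpotentMul mulT403 ∧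
      ∃ g, GeneratedBy ℂ mulT403 g := by
  refine ⟨?_, ?_, ?_⟩
  · intro a x y z
    funext i
    fin_cases i <;>
      simp [biBr, opBr, mulT403, Pi.sub_apply, Pi.add_apply] <;> ring
  · refine ⟨4, fun x hx => ?_⟩
    funext i
    exact prods_zero_T403 4 x hx i (by omega)
  · refine ⟨![1,0,0,0], ?_⟩
    intro S hmul hg v
    set e0 : Fin 4 → ℂ := ![1,0,0,0] with he0
    have h1 : mulT403 e0 e0 ∈ S := hmul _ hg _ hg
    have h2 : mulT403 e0 (mulT403 e0 e0) ∈ S := hmul _ hg _ h1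
    have h3 : mulT403 e0 (mulT403 e0 (mulT403 e0 e0)) ∈ S := hmul _ hg _ h2
    have hv : v = v 0 • e0 + v 1 • mulT403 e0 e0 + v 2 • mulT403 e0 (mulT403 e0 e0)
        + v 3 • mulT403 e0 (mulT403 e0 (mulT403 e0 e0)) := by
      funext i
      fin_cases i <;> simp [mulT403, he0]
    rw [hv]
    exact S.add_mem (S.add_mem (S.add_mem (S.smul_mem _ hg) (S.smul_mem _ h1))
      (S.smul_mem _ h2)) (S.smul_mem _ h3)
end

section
/- The 4-dimensional complex algebras T⁴₀₃ (nonzero products e₁e₁ = e₂, e₁e₂ = e₃, e₁e₃ = e₄) and T⁴₀₄ (nonzero products e₁e₁ = e₂, e₁e₂ = e₃, e₁e₃ = e₄, e₂e₁ = e₄) are not isomorphic. -/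
/-- The 4-dimensional algebra `T⁴₀₄`:
`e₁e₁ = e₂`, `e₁e₂ = e₃`, `e₁e₃ = e₄`, `e₂e₁ = e₄`. -/
def mulT404 (u v : Fin 4 → ℂ) : Fin 4 → ℂ :=
  ![0, u 0 * v 0, u 0 * v 1, u 0 * v 2 + u 1 * v 0]

/-- `T⁴₀₃` and `T⁴₀₄` are not isomorphic. -/
theorem T403_not_isomorphic_T404 :
    ¬ ∃ φ : (Fin 4 → ℂ) ≃ₗ[ℂ] (Fin 4 → ℂ),
        ∀ u v, φ (mulT403 u v) = mulT404 (φ u) (φ v) := by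
  rintro ⟨φ, hφ⟩
  -- basis vectors e₂, e₃, e₄ (indices 1,2,3)
  set b : Fin 3 → (Fin 4 → ℂ) := fun i => Pi.single (i.succ) 1 with hb
  -- each φ (b i) has coords 0 and 1 zero
  have key : ∀ i : Fin 3, φ (b i) 0 = 0 ∧ φ (b i) 1 = 0 := by
    intro i
    have h0 : ∀ w : Fin 4 → ℂ, mulT404 (φ (b i)) w = 0 := by
      intro w
      obtain ⟨v, rfl⟩ := φ.surjective w
      rw [← hφ]
      have : mulT403 (b i) v = 0 := by
        have hb0 : b i 0 = 0 := by
          simp [hb, Pi.single_apply, Fin.succ_ne_zero]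
        funext j
        fin_cases j <;> simp [mulT403, hb0]
      rw [this, map_zero]
    have h1 := congrFun (h0 (Pi.single 0 1)) 1
    have h3 := congrFun (h0 (Pi.single 0 1)) 3
    simp [mulT404] at h1 h3
    exact ⟨h1, h3⟩
  -- φ ∘ b lands in span of e₃,e₄
  have hle : Submodule.span ℂ (Set.range (φ ∘ b)) ≤
      Submodule.span ℂ (Set.range ![(Pi.single 2 1 : Fin 4 → ℂ), Pi.single 3 1]) := by
    rw [Submodule.span_le]
    rintro _ ⟨i, rfl⟩
    have h0 := (key i).1
    have h1 := (key i).2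
    have : φ (b i) = (φ (b i) 2) • (Pi.single 2 1 : Fin 4 → ℂ) + (φ (b i) 3) • (Pi.single 3 1 : Fin 4 → ℂ) := by
      funext j
      fin_cases j <;> simp [Pi.single_apply, h0, h1]
    show φ (b i) ∈ _
    rw [this]
    exact Submodule.add_mem _
      (Submodule.smul_mem _ _ (Submodule.subset_span ⟨0, rfl⟩))
      (Submodule.smul_mem _ _ (Submodule.subset_span ⟨1, rfl⟩))
  have libasis : LinearIndependent ℂ b := by
    have := (Pi.basisFun ℂ (Fin 4)).linearIndependent
    have := this.comp (fun i : Fin 3 => i.succ) (fun i j h => Fin.succ_injective _ h)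
    have heq : (⇑(Pi.basisFun ℂ (Fin 4)) ∘ fun i : Fin 3 => i.succ) = b := by
      funext i; simp [hb, Pi.basisFun_apply]
    rwa [heq] at this
  have li : LinearIndependent ℂ (φ ∘ b) := libasis.map' φ.toLinearMap φ.ker
  have h3 : Module.finrank ℂ (Submodule.span ℂ (Set.range (φ ∘ b))) = 3 := by
    rw [finrank_span_eq_card li]; simp
  have h2 : Module.finrank ℂ
      (Submodule.span ℂ (Set.range ![(Pi.single 2 1 : Fin 4 → ℂ), Pi.single 3 1])) ≤ 2 := by
    simpa [Set.finrank] using finrank_range_le_card (R := ℂ) ![(Pi.single 2 1 : Fin 4 → ℂ), Pi.single 3 1]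
  have := Submodule.finrank_mono hle
  omega
end

section
/- The 5-dimensional complex algebra T⁵₂₇ with nonzero products e₁e₁ = e₂, e₁e₂ = e₃, e₁e₃ = e₄, e₁e₄ = e₅ is a one-generated nilpotent terminal algebra. -/
/-- The 5-dimensional algebra `T⁵₂₇` with nonzero products
`e₁e₁ = e₂`, `e₁e₂ = e₃`, `e₁e₃ = e₄`, `e₁e₄ = e₅`. -/
def mulT527 (u v : Fin 5 → ℂ) : Fin 5 → ℂ :=
  ![0, u 0 * v 0, u 0 * v 1, u 0 * v 2, u 0 * v 3]


lemma prods_vanish_T527 :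
    ∀ n, ∀ x ∈ prods mulT527 n, ∀ j : Fin 5, (j : ℕ) < n → x j = 0 := by
  intro n
  induction n using Nat.strong_induction_on with
  | _ n ih =>
    match n with
    | 0 => intro x _ j hj; omega
    | n + 1 =>
      intro x hx j hj
      simp only [prods, Set.mem_iUnion, Set.mem_setOf_eq] at hx
      obtain ⟨i, a, ha, b, hb, rfl⟩ := hx
      rcases Nat.eq_zero_or_pos i.1 with h0 | h0
      · rw [h0] at hb; simp at hb
        have hb' := ih n (Nat.lt_succ_self n) b hb
        fin_cases j <;> simp [mulT527] at hj ⊢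
        · exact Or.inr (hb' 0 (by omega))
        · exact Or.inr (hb' 1 (by omega))
        · exact Or.inr (hb' 2 (by omega))
        · exact Or.inr (hb' 3 (by omega))
      · have ha0 : a 0 = 0 := ih i.1 (by omega) a ha 0 (by omega)
        fin_cases j <;> simp [mulT527, ha0]

/-- `T⁵₂₇` is a one-generated nilpotent terminal algebra (generated by `e₁`). -/
theorem T527_terminal_nilpotent_oneGenerated :
    IsTerminalMul mulT527 ∧ IsNilpotentMul mulT527 ∧
      GeneratedBy ℂ mulT527 ![1, 0, 0, 0, 0] := by
  refine ⟨?_, ?_, ?_⟩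
  · intro a x y z
    funext i
    fin_cases i <;> simp [biBr, opBr, mulT527] <;> ring
  · exact ⟨5, fun x hx => funext fun j =>
      prods_vanish_T527 5 x hx j (by omega)⟩
  · intro S hmul h1 v
    set e1 : Fin 5 → ℂ := ![1, 0, 0, 0, 0] with he1
    have h2 : mulT527 e1 e1 ∈ S := hmul _ h1 _ h1
    have h3 : mulT527 e1 (mulT527 e1 e1) ∈ S := hmul _ h1 _ h2
    have h4 : mulT527 e1 (mulT527 e1 (mulT527 e1 e1)) ∈ S := hmul _ h1 _ h3
    have h5 : mulT527 e1 (mulT527 e1 (mulT527 e1 (mulT527 e1 e1))) ∈ S := hmul _ h1 _ h4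
    have hv : v = v 0 • e1 + v 1 • mulT527 e1 e1 + v 2 • mulT527 e1 (mulT527 e1 e1)
        + v 3 • mulT527 e1 (mulT527 e1 (mulT527 e1 e1))
        + v 4 • mulT527 e1 (mulT527 e1 (mulT527 e1 (mulT527 e1 e1))) := by
      funext i; fin_cases i <;> simp [mulT527, he1]
    rw [hv]
    exact S.add_mem (S.add_mem (S.add_mem (S.add_mem (S.smul_mem _ h1)
      (S.smul_mem _ h2)) (S.smul_mem _ h3)) (S.smul_mem _ h4)) (S.smul_mem _ h5)
end
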